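/- Let 1 ≤ p < ∞ with conjugate exponent p'. Assume: J is symmetric with ‖J‖_{p'} < ∞ and ‖J‖_1 ≤ 1; h ∈ L^∞(Ω); g : ℝ → ℝ is Lipschitz continuous on bounded sets with |g(s)| ≤ k_g|s| + c_g; f : ℝ^N × ℝ → ℝ is measurable in x with |f(x,s) − f(x,t)| ≤ k|s − t| and |f(x,s)| ≤ k_f|s| + c_f for all x, s, t. Let F : L^p(Ω) → L^p(Ω) be defined by F(u) = −h·u + g ∘ (K_J u) + f(·, u(·)). Then for every u_0 ∈ L^p(Ω) there exists a unique function u : [0,∞) → L^p(Ω) with u(0) = u_0 that is differentiable on [0,∞) and satisfies u'(t) = F(u(t)) for all t ≥ 0. -/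

import Mathlib

open MeasureTheory ENNReal NNReal Set

/-- The nonlocal operator `(K_J u)(x) = ∫_Ω J(x,y) u(y) dy`. -/
noncomputable def KJ {N : ℕ} (Ω : Set (Fin N → ℝ)) (J : (Fin N → ℝ) → (Fin N → ℝ) → ℝ)
    (u : (Fin N → ℝ) → ℝ) (x : Fin N → ℝ) : ℝ :=
  ∫ y in Ω, J x y * u y

/-- `‖J‖_r = sup_{x ∈ Ω} ‖J(x,·)‖_{L^r(Ω)}`. -/
noncomputable def kernelNorm {N : ℕ} (Ω : Set (Fin N → ℝ))
    (J : (Fin N → ℝ) → (Fin N → ℝ) → ℝ) (r : ℝ≥0∞) : ℝ≥0∞ :=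
  ⨆ x ∈ Ω, eLpNorm (J x) r (volume.restrict Ω)

/-- The right-hand side map `F(u) = -h·u + g ∘ (K_J u) + f(·, u(·))`. -/
noncomputable def Fmap {N : ℕ} (Ω : Set (Fin N → ℝ)) (J : (Fin N → ℝ) → (Fin N → ℝ) → ℝ)
    (h : (Fin N → ℝ) → ℝ) (g : ℝ → ℝ) (f : (Fin N → ℝ) → ℝ → ℝ)
    (u : (Fin N → ℝ) → ℝ) : (Fin N → ℝ) → ℝ :=
  fun x => -h x * u x + g (KJ Ω J u x) + f x (u x)

/-- `u : ℝ → L^p(Ω)` is a global solution of `u' = F(u)`, `u(0) = u₀`, on `[0,∞)`: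
at every `t ≥ 0` it has a derivative (within `[0,∞)`) whose class in `L^p` is `F(u(t))`. -/
def IsGlobalSolution {N : ℕ} (Ω : Set (Fin N → ℝ)) (J : (Fin N → ℝ) → (Fin N → ℝ) → ℝ)
    (h : (Fin N → ℝ) → ℝ) (g : ℝ → ℝ) (f : (Fin N → ℝ) → ℝ → ℝ)
    (p : ℝ≥0∞) [Fact (1 ≤ p)]
    (u₀ : Lp ℝ p (volume.restrict Ω : Measure (Fin N → ℝ)))
    (u : ℝ → Lp ℝ p (volume.restrict Ω : Measure (Fin N → ℝ))) : Prop :=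
  u 0 = u₀ ∧
  ∀ t : ℝ, 0 ≤ t →
    ∃ D : Lp ℝ p (volume.restrict Ω : Measure (Fin N → ℝ)),
      HasDerivWithinAt u D (Ici 0) t ∧
      (⇑D : (Fin N → ℝ) → ℝ) =ᵐ[volume.restrict Ω] Fmap Ω J h g f (⇑(u t))

open Metric

noncomputable section AbstractODE

variable {E : Type*} [NormedAddCommGroup E] [NormedSpace ℝ E]

/-- Radial projection onto the closed ball of radius `R` around the origin. -/
noncomputable def projBall (R : ℝ) (x : E) : E := (R / max R ‖x‖) • x

lemma projBall_norm_le_self {R : ℝ} (hR : 0 < R) (x : E) : ‖projBall R x‖ ≤ ‖x‖ := by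
  have hmax : 0 < max R ‖x‖ := lt_max_of_lt_left hR
  have h1 : R / max R ‖x‖ ≤ 1 := div_le_one_of_le₀ (le_max_left _ _) hmax.le
  have h0 : 0 ≤ R / max R ‖x‖ := div_nonneg hR.le hmax.le
  calc ‖projBall R x‖ = (R / max R ‖x‖) * ‖x‖ := by
        rw [projBall, norm_smul, Real.norm_of_nonneg h0]
    _ ≤ 1 * ‖x‖ := by gcongr
    _ = ‖x‖ := one_mul _

lemma projBall_norm_le {R : ℝ} (hR : 0 < R) (x : E) : ‖projBall R x‖ ≤ R := by
  have hmax : 0 < max R ‖x‖ := lt_max_of_lt_left hR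
  have h0 : 0 ≤ R / max R ‖x‖ := div_nonneg hR.le hmax.le
  have : ‖projBall R x‖ = R * (‖x‖ / max R ‖x‖) := by
    rw [projBall, norm_smul, Real.norm_of_nonneg h0]; ring
  rw [this]
  have : ‖x‖ / max R ‖x‖ ≤ 1 := div_le_one_of_le₀ (le_max_right _ _) hmax.le
  calc R * (‖x‖ / max R ‖x‖) ≤ R * 1 := by gcongr
    _ = R := mul_one _

lemma projBall_of_norm_le {R : ℝ} (hR : 0 < R) {x : E} (hx : ‖x‖ ≤ R) : projBall R x = x := by
  rw [projBall, max_eq_left hx, div_self hR.ne', one_smul]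

lemma lipschitzWith_projBall {R : ℝ} (hR : 0 < R) : LipschitzWith 2 (projBall (E := E) R) := by
  apply LipschitzWith.of_dist_le_mul
  intro x y
  set a := max R ‖x‖ with ha
  set b := max R ‖y‖ with hb
  have ha0 : 0 < a := lt_max_of_lt_left hR
  have hb0 : 0 < b := lt_max_of_lt_left hR
  have key : projBall R x - projBall R y = (R / a - R / b) • x + (R / b) • (x - y) := by
    rw [projBall, projBall]; module
  have hab : |b - a| ≤ dist x y := by
    rw [ha, hb, max_comm R ‖x‖, max_comm R ‖y‖]
    refine (abs_max_sub_max_le_abs _ _ _).trans ?_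
    rw [abs_sub_comm]
    exact (abs_norm_sub_norm_le x y).trans (le_of_eq (dist_eq_norm x y).symm)
  have term1 : ‖(R / a - R / b) • x‖ ≤ dist x y := by
    rw [norm_smul, Real.norm_eq_abs]
    have hxa : ‖x‖ ≤ a := le_max_right _ _
    have hfrac : |R / a - R / b| = R * |b - a| / (a * b) := by
      rw [div_sub_div _ _ ha0.ne' hb0.ne', abs_div, abs_of_pos (mul_pos ha0 hb0)]
      have : R * b - a * R = R * (b - a) := by ring
      rw [this, abs_mul, abs_of_pos hR]
    rw [hfrac]
    calc R * |b - a| / (a * b) * ‖x‖ ≤ R * |b - a| / (a * b) * a := by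
          gcongr
      _ = (R / b) * |b - a| := by field_simp
      _ ≤ 1 * |b - a| := by
          gcongr
          exact div_le_one_of_le₀ (le_max_left _ _) hb0.le
      _ = |b - a| := one_mul _
      _ ≤ dist x y := hab
  have term2 : ‖(R / b) • (x - y)‖ ≤ dist x y := by
    rw [norm_smul, Real.norm_of_nonneg (div_nonneg hR.le hb0.le), ← dist_eq_norm]
    calc (R / b) * dist x y ≤ 1 * dist x y := by
          gcongr
          exact div_le_one_of_le₀ (le_max_left _ _) hb0.le
      _ = dist x y := one_mul _
  calc dist (projBall R x) (projBall R y) = ‖(R / a - R / b) • x + (R / b) • (x - y)‖ := by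
        rw [dist_eq_norm, key]
    _ ≤ ‖(R / a - R / b) • x‖ + ‖(R / b) • (x - y)‖ := norm_add_le _ _
    _ ≤ dist x y + dist x y := add_le_add term1 term2
    _ = 2 * dist x y := by ring



lemma gronwallBound_nonneg {δ K ε : ℝ} (hδ : 0 ≤ δ) (hK : 0 ≤ K) (hε : 0 ≤ ε) {t : ℝ}
    (ht : 0 ≤ t) : 0 ≤ gronwallBound δ K ε t := by
  rcases eq_or_ne K 0 with hK0 | hK0
  · rw [hK0, gronwallBound_K0]; positivity
  · rw [gronwallBound_of_K_ne_0 hK0]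
    have h1 : (1:ℝ) ≤ Real.exp (K * t) := by
      rw [← Real.exp_zero]; exact Real.exp_le_exp.2 (by positivity)
    have hKpos : 0 < K := lt_of_le_of_ne hK (Ne.symm hK0)
    have : 0 ≤ ε / K * (Real.exp (K * t) - 1) := by
      apply mul_nonneg (div_nonneg hε hK); linarith
    nlinarith [Real.exp_pos (K * t)]

lemma gronwallBound_mono_aux {δ K ε : ℝ} (hδ : 0 ≤ δ) (hK : 0 ≤ K) (hε : 0 ≤ ε) {s t : ℝ}
    (hs : 0 ≤ s) (hst : s ≤ t) : gronwallBound δ K ε s ≤ gronwallBound δ K ε t := by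
  rcases eq_or_ne K 0 with hK0 | hK0
  · rw [hK0, gronwallBound_K0]; dsimp; nlinarith
  · rw [gronwallBound_of_K_ne_0 hK0]
    dsimp only
    have hKpos : 0 < K := lt_of_le_of_ne hK (Ne.symm hK0)
    have hexp : Real.exp (K * s) ≤ Real.exp (K * t) := Real.exp_le_exp.2 (by nlinarith)
    have h2 : ε / K * (Real.exp (K * s) - 1) ≤ ε / K * (Real.exp (K * t) - 1) := by
      apply mul_le_mul_of_nonneg_left (by linarith) (div_nonneg hε hK)
    nlinarith

lemma apriori_bound {A B : ℝ} (hA : 0 ≤ A) (hB : 0 ≤ B) {T : ℝ} (hT : 0 ≤ T) {f f' : ℝ → E}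
    (hc : ContinuousOn f (Icc 0 T))
    (hf' : ∀ t ∈ Ico 0 T, HasDerivWithinAt f (f' t) (Ici t) t)
    (hb : ∀ t ∈ Ico 0 T, ‖f' t‖ ≤ A * ‖f t‖ + B) :
    ∀ t ∈ Icc 0 T, ‖f t‖ ≤ gronwallBound ‖f 0‖ A B T := by
  intro t ht
  have h1 := norm_le_gronwallBound_of_norm_deriv_right_le hc hf' le_rfl hb t ht
  rw [sub_zero] at h1
  exact h1.trans (gronwallBound_mono_aux (norm_nonneg _) hA hB ht.1 ht.2)

variable {F : E → E} {A B : ℝ}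

lemma uniqOn (hA : 0 ≤ A) (hB : 0 ≤ B)
    (hlip : ∀ R : ℝ, ∃ L : ℝ≥0, LipschitzOnWith L F (closedBall 0 R))
    (hgrow : ∀ x, ‖F x‖ ≤ A * ‖x‖ + B)
    {T : ℝ} (hT : 0 ≤ T) {f g : ℝ → E}
    (hfc : ContinuousOn f (Icc 0 T))
    (hf' : ∀ t ∈ Ico 0 T, HasDerivWithinAt f (F (f t)) (Ici t) t)
    (hgc : ContinuousOn g (Icc 0 T))
    (hg' : ∀ t ∈ Ico 0 T, HasDerivWithinAt g (F (g t)) (Ici t) t)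
    (h0 : f 0 = g 0) : EqOn f g (Icc 0 T) := by
  set R := gronwallBound ‖f 0‖ A B T with hR
  obtain ⟨L, hL⟩ := hlip R
  have hbf : ∀ t ∈ Ico 0 T, f t ∈ closedBall (0 : E) R := by
    intro t ht
    rw [mem_closedBall_zero_iff]
    exact apriori_bound hA hB hT hfc hf' (fun s _ => hgrow (f s)) t (Ico_subset_Icc_self ht)
  have hbg : ∀ t ∈ Ico 0 T, g t ∈ closedBall (0 : E) R := by
    intro t ht
    rw [mem_closedBall_zero_iff, hR, h0]
    exact apriori_bound hA hB hT hgc hg' (fun s _ => hgrow (g s)) t (Ico_subset_Icc_self ht)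
  exact ODE_solution_unique_of_mem_Icc_right (v := fun _ => F)
    (s := fun _ => closedBall (0 : E) R) (fun _ _ => hL) hfc hf' hbf hgc hg' hbg h0

lemma existsOn [CompleteSpace E] (hA : 0 ≤ A) (hB : 0 ≤ B)
    (hlip : ∀ R : ℝ, ∃ L : ℝ≥0, LipschitzOnWith L F (closedBall 0 R))
    (hgrow : ∀ x, ‖F x‖ ≤ A * ‖x‖ + B) (x₀ : E) {T : ℝ} (hT : 0 ≤ T) :
    ∃ f : ℝ → E, f 0 = x₀ ∧ ∀ t ∈ Icc 0 T, HasDerivWithinAt f (F (f t)) (Icc 0 T) t := by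
  set R := gronwallBound ‖x₀‖ A B T + 1 with hRdef
  have hR : 0 < R :=
    lt_of_lt_of_le one_pos (by
      have := gronwallBound_nonneg (δ := ‖x₀‖) (norm_nonneg _) hA hB hT; linarith)
  obtain ⟨L, hL⟩ := hlip R
  set C := A * R + B with hC
  have hCpos : 0 ≤ C := by positivity
  set R' := C * T + 1 with hR'
  have hpl : IsPicardLindelof (fun _ x => F (projBall R x)) (tmin := 0) (tmax := T)
      ⟨0, ⟨le_rfl, hT⟩⟩ x₀ R'.toNNReal 0 C.toNNReal (L * 2) := by
    constructor
    · intro t _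
      have comp : LipschitzWith (L * 2) fun x => F (projBall R x) := by
        intro x y
        have h1 : projBall R x ∈ closedBall (0 : E) R := by
          rw [mem_closedBall_zero_iff]; exact projBall_norm_le hR x
        have h2 : projBall R y ∈ closedBall (0 : E) R := by
          rw [mem_closedBall_zero_iff]; exact projBall_norm_le hR y
        calc edist (F (projBall R x)) (F (projBall R y))
            ≤ L * edist (projBall R x) (projBall R y) := hL h1 h2
          _ ≤ L * (2 * edist x y) := by
              exact mul_le_mul_right (lipschitzWith_projBall hR x y) _
          _ = (L * 2 : ℝ≥0) * edist x y := by
              push_cast; rw [mul_assoc]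
      exact comp.lipschitzOnWith
    · exact fun x _ => continuousOn_const
    · intro t _ x _
      rw [Real.coe_toNNReal _ hCpos]
      refine (hgrow _).trans ?_
      have := projBall_norm_le hR x
      nlinarith
    · simp only [Real.coe_toNNReal _ hCpos, Real.coe_toNNReal _ (by rw [hR']; positivity : (0:ℝ) ≤ R'),
        NNReal.coe_zero, sub_zero, sub_self]
      rw [max_eq_left hT]
      linarith
  obtain ⟨f, hf0, hf⟩ := hpl.exists_eq_forall_mem_Icc_hasDerivWithinAt₀
  change f 0 = x₀ at hf0
  have hc : ContinuousOn f (Icc 0 T) := fun t ht => (hf t ht).continuousWithinAt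
  have hf'Ici : ∀ t ∈ Ico 0 T, HasDerivWithinAt f (F (projBall R (f t))) (Ici t) t := fun t ht =>
    (hf t (Ico_subset_Icc_self ht)).mono_of_mem_nhdsWithin (Icc_mem_nhdsGE_of_mem ht)
  have hbd : ∀ t ∈ Icc 0 T, ‖f t‖ ≤ gronwallBound ‖f 0‖ A B T := by
    refine apriori_bound hA hB hT hc hf'Ici ?_
    intro t _
    refine (hgrow _).trans ?_
    have h1 := projBall_norm_le_self hR (f t)
    nlinarith
  refine ⟨f, hf0, fun t ht => ?_⟩
  have hft : ‖f t‖ ≤ R := by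
    have := hbd t ht
    rw [hf0] at this
    rw [hRdef]; linarith
  have : F (f t) = F (projBall R (f t)) := by rw [projBall_of_norm_le hR hft]
  rw [this]
  exact hf t ht

theorem abstract_ode [CompleteSpace E] (hA : 0 ≤ A) (hB : 0 ≤ B)
    (hlip : ∀ R : ℝ, ∃ L : ℝ≥0, LipschitzOnWith L F (closedBall 0 R))
    (hgrow : ∀ x, ‖F x‖ ≤ A * ‖x‖ + B) (x₀ : E) :
    ∃ u : ℝ → E, u 0 = x₀ ∧ (∀ t, 0 ≤ t → HasDerivWithinAt u (F (u t)) (Ici 0) t) ∧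
      ∀ v : ℝ → E, v 0 = x₀ → (∀ t, 0 ≤ t → HasDerivWithinAt v (F (v t)) (Ici 0) t) →
        ∀ t, 0 ≤ t → v t = u t := by
  choose Y hY0 hY using fun n : ℕ =>
    existsOn hA hB hlip hgrow x₀ (n.cast_nonneg : (0:ℝ) ≤ n)
  have hYIci : ∀ (n : ℕ), ∀ t ∈ Ico (0:ℝ) (n:ℝ), HasDerivWithinAt (Y n) (F (Y n t)) (Ici t) t :=
    fun n t ht =>
      (hY n t (Ico_subset_Icc_self ht)).mono_of_mem_nhdsWithin (Icc_mem_nhdsGE_of_mem ht)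
  have hYc : ∀ n : ℕ, ContinuousOn (Y n) (Icc 0 (n:ℝ)) :=
    fun n t ht => (hY n t ht).continuousWithinAt
  have agree : ∀ m n : ℕ, ∀ t ∈ Icc (0:ℝ) (min (m:ℝ) (n:ℝ)), Y m t = Y n t := by
    intro m n t ht
    have hmin : (0:ℝ) ≤ min (m:ℝ) (n:ℝ) := le_min m.cast_nonneg n.cast_nonneg
    refine uniqOn hA hB hlip hgrow hmin
      ((hYc m).mono (Icc_subset_Icc le_rfl (min_le_left _ _)))
      (fun s hs => hYIci m s (Ico_subset_Ico le_rfl (min_le_left _ _) hs))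
      ((hYc n).mono (Icc_subset_Icc le_rfl (min_le_right _ _)))
      (fun s hs => hYIci n s (Ico_subset_Ico le_rfl (min_le_right _ _) hs))
      (by rw [hY0 m, hY0 n]) ht
  set u : ℝ → E := fun t => Y (⌊max t 0⌋₊ + 1) t with hu
  have hueq : ∀ s : ℝ, 0 ≤ s → u s = Y (⌊s⌋₊ + 1) s := by
    intro s hs
    rw [hu]
    simp only [max_eq_left hs]
  have hu0 : u 0 = x₀ := by
    rw [hueq 0 le_rfl]
    simpa using hY0 1
  have husol : ∀ t, 0 ≤ t → HasDerivWithinAt u (F (u t)) (Ici 0) t := by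
    intro t ht
    set n := ⌊t⌋₊ + 1 with hn
    have htn : t < (n : ℝ) := by
      have := Nat.lt_floor_add_one t
      push_cast [hn]
      linarith
    have hmem : Icc (0:ℝ) (n:ℝ) ∈ nhdsWithin t (Ici (0:ℝ)) := by
      refine Filter.mem_of_superset
        (inter_mem_nhdsWithin (Ici (0:ℝ)) (Iio_mem_nhds htn)) ?_
      rintro s ⟨hs0, hsn⟩
      exact ⟨hs0, hsn.le⟩
    have heq : ∀ s ∈ Ici (0:ℝ) ∩ Iio (n:ℝ), u s = Y n s := by
      intro s hs
      obtain ⟨hs0, hsn⟩ := hs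
      rw [hueq s hs0]
      apply agree
      refine ⟨hs0, le_min ?_ hsn.le⟩
      have := Nat.lt_floor_add_one s
      push_cast
      linarith
    have hut : u t = Y n t := heq t ⟨ht, htn⟩
    have hd : HasDerivWithinAt (Y n) (F (Y n t)) (Ici (0:ℝ)) t :=
      (hY n t ⟨ht, htn.le⟩).mono_of_mem_nhdsWithin hmem
    rw [hut]
    exact hd.congr_of_eventuallyEq (Filter.eventually_of_mem
      (inter_mem_nhdsWithin (Ici (0:ℝ)) (Iio_mem_nhds htn)) heq) hut
  refine ⟨u, hu0, husol, ?_⟩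
  intro v hv0 hvsol t ht
  have hvc : ContinuousOn v (Icc 0 t) := fun s hs =>
    ((hvsol s hs.1).continuousWithinAt).mono (fun y hy => hy.1)
  have huc : ContinuousOn u (Icc 0 t) := fun s hs =>
    ((husol s hs.1).continuousWithinAt).mono (fun y hy => hy.1)
  exact uniqOn hA hB hlip hgrow ht hvc
    (fun s hs => (hvsol s hs.1).mono (fun y hy => hs.1.trans hy))
    huc (fun s hs => (husol s hs.1).mono (fun y hy => hs.1.trans hy))
    (hv0.trans hu0.symm) ⟨ht, le_rfl⟩

end AbstractODE


section AnalysisAux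

open Metric

variable {N : ℕ} {Ω : Set (Fin N → ℝ)} {J : (Fin N → ℝ) → (Fin N → ℝ) → ℝ}
  {g : ℝ → ℝ} {f : (Fin N → ℝ) → ℝ → ℝ} {p p' : ℝ≥0∞}

lemma KJ_nnnorm_bound (hJmeas : Measurable (Function.uncurry J)) (hpp' : 1 / p + 1 / p' = 1)
    {w : (Fin N → ℝ) → ℝ} (hw : AEStronglyMeasurable w (volume.restrict Ω))
    {x : Fin N → ℝ} (hx : x ∈ Ω) :
    (‖KJ Ω J w x‖₊ : ℝ≥0∞) ≤ kernelNorm Ω J p' * eLpNorm w p (volume.restrict Ω) := by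
  have hconj : (1 : ℝ≥0∞) / 1 = 1 / p' + 1 / p := by
    rw [div_one, add_comm]; exact hpp'.symm
  haveI : ENNReal.HolderTriple p' p 1 := ⟨by rw [inv_one, add_comm]; simpa [one_div] using hpp'⟩
  have hJx : AEStronglyMeasurable (J x) (volume.restrict Ω) :=
    (hJmeas.of_uncurry_left).aestronglyMeasurable
  have h1 : (‖KJ Ω J w x‖₊ : ℝ≥0∞) ≤ eLpNorm (fun y => J x y * w y) 1 (volume.restrict Ω) := by
    rw [eLpNorm_one_eq_lintegral_enorm]
    exact enorm_integral_le_lintegral_enorm _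
  refine h1.trans ?_
  have h2 : eLpNorm (fun y => J x y * w y) 1 (volume.restrict Ω)
      ≤ eLpNorm (J x) p' (volume.restrict Ω) * eLpNorm w p (volume.restrict Ω) := by
    have := eLpNorm_smul_le_mul_eLpNorm (f := w) (φ := J x) (p := p') (q := p) (r := 1)
      (μ := volume.restrict Ω) hw hJx
    exact this
  refine h2.trans ?_
  exact mul_le_mul_left (le_biSup (fun x => eLpNorm (J x) p' (volume.restrict Ω)) hx) _

lemma KJ_integrable (hJmeas : Measurable (Function.uncurry J)) (hpp' : 1 / p + 1 / p' = 1)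
    (hJp' : kernelNorm Ω J p' < ⊤) {w : (Fin N → ℝ) → ℝ}
    (hw : MemLp w p (volume.restrict Ω)) {x : Fin N → ℝ} (hx : x ∈ Ω) :
    Integrable (fun y => J x y * w y) (volume.restrict Ω) := by
  have hconj : (1 : ℝ≥0∞) / 1 = 1 / p' + 1 / p := by
    rw [div_one, add_comm]; exact hpp'.symm
  haveI : ENNReal.HolderTriple p' p 1 := ⟨by rw [inv_one, add_comm]; simpa [one_div] using hpp'⟩
  have hJx : AEStronglyMeasurable (J x) (volume.restrict Ω) :=
    (hJmeas.of_uncurry_left).aestronglyMeasurable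
  rw [← memLp_one_iff_integrable]
  refine ⟨hJx.mul hw.1, ?_⟩
  have hsm : eLpNorm (fun y => J x y * w y) 1 (volume.restrict Ω)
      ≤ eLpNorm (J x) p' (volume.restrict Ω) * eLpNorm w p (volume.restrict Ω) := by
    have := eLpNorm_smul_le_mul_eLpNorm (f := w) (φ := J x) (p := p') (q := p) (r := 1)
      (μ := volume.restrict Ω) hw.1 hJx
    exact this
  refine lt_of_le_of_lt hsm ?_
  refine ENNReal.mul_lt_top ?_ hw.2
  exact lt_of_le_of_lt (le_biSup (fun x => eLpNorm (J x) p' (volume.restrict Ω)) hx) hJp'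

lemma KJ_measurable (hJmeas : Measurable (Function.uncurry J)) {w : (Fin N → ℝ) → ℝ}
    (hw : Measurable w) : Measurable (KJ Ω J w) := by
  have hm : StronglyMeasurable
      (fun q : (Fin N → ℝ) × (Fin N → ℝ) => J q.1 q.2 * w q.2) :=
    (hJmeas.mul (hw.comp measurable_snd)).stronglyMeasurable
  exact hm.integral_prod_right'.measurable

lemma KJ_congr {w w' : (Fin N → ℝ) → ℝ} (hww' : w =ᵐ[volume.restrict Ω] w') :
    KJ Ω J w = KJ Ω J w' :=
  funext fun x => integral_congr_ae (hww'.mono fun y hy => by dsimp only; rw [hy])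

lemma g_continuous (hg : ∀ B : Set ℝ, Bornology.IsBounded B → ∃ L : ℝ≥0, LipschitzOnWith L g B) :
    Continuous g := by
  rw [continuous_iff_continuousAt]
  intro s
  obtain ⟨L, hL⟩ := hg (closedBall s 1) isBounded_closedBall
  exact hL.continuousOn.continuousAt (closedBall_mem_nhds s one_pos)

lemma f_comp_measurable {k : ℝ≥0} (hfmeas : ∀ s : ℝ, Measurable fun x => f x s)
    (hflip : ∀ x : Fin N → ℝ, LipschitzWith k (f x)) {w : (Fin N → ℝ) → ℝ}
    (hw : Measurable w) : Measurable fun x => f x (w x) := by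
  have huncurry : Measurable (Function.uncurry fun (s : ℝ) (x : Fin N → ℝ) => f x s) :=
    measurable_uncurry_of_continuous_of_measurable (fun x => (hflip x).continuous) hfmeas
  exact huncurry.comp (hw.prodMk measurable_id)

end AnalysisAux


/-- global existence and uniqueness for the Cauchy problem `u' = F(u)`,
`u(0) = u₀`, in `L^p(Ω)`. -/
theorem stmt6 {N : ℕ} (Ω : Set (Fin N → ℝ)) (hΩ : MeasurableSet Ω)
    (hΩfin : volume Ω < ⊤)
    (J : (Fin N → ℝ) → (Fin N → ℝ) → ℝ) (hJmeas : Measurable (Function.uncurry J))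
    (hJsymm : ∀ x y, J x y = J y x)
    (p p' : ℝ≥0∞) [Fact (1 ≤ p)] (hptop : p ≠ ⊤) (hpp' : 1 / p + 1 / p' = 1)
    (hJp' : kernelNorm Ω J p' < ⊤) (hJ1 : kernelNorm Ω J 1 ≤ 1)
    (h : (Fin N → ℝ) → ℝ) (hh : MemLp h ⊤ (volume.restrict Ω))
    (g : ℝ → ℝ)
    (hg : ∀ B : Set ℝ, Bornology.IsBounded B → ∃ L : ℝ≥0, LipschitzOnWith L g B)
    (f : (Fin N → ℝ) → ℝ → ℝ) (hfmeas : ∀ s : ℝ, Measurable fun x => f x s)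
    (k : ℝ≥0) (hflip : ∀ x : Fin N → ℝ, LipschitzWith k (f x))
    (k_g c_g k_f c_f : ℝ) (hkg : 0 ≤ k_g) (hcg : 0 ≤ c_g) (hkf : 0 ≤ k_f) (hcf : 0 ≤ c_f)
    (hggrowth : ∀ s : ℝ, |g s| ≤ k_g * |s| + c_g)
    (hfgrowth : ∀ (x : Fin N → ℝ) (s : ℝ), |f x s| ≤ k_f * |s| + c_f)
    (u₀ : Lp ℝ p (volume.restrict Ω : Measure (Fin N → ℝ))) :
    ∃ u : ℝ → Lp ℝ p (volume.restrict Ω : Measure (Fin N → ℝ)),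
      IsGlobalSolution Ω J h g f p u₀ u ∧
      ∀ v : ℝ → Lp ℝ p (volume.restrict Ω : Measure (Fin N → ℝ)),
        IsGlobalSolution Ω J h g f p u₀ v → ∀ t : ℝ, 0 ≤ t → v t = u t := by
  classical
  haveI : IsFiniteMeasure (volume.restrict Ω : Measure (Fin N → ℝ)) :=
    ⟨by rwa [Measure.restrict_apply_univ]⟩
  let μ : Measure (Fin N → ℝ) := volume.restrict Ω
  have hμdef : μ = volume.restrict Ω := rfl
  haveI : IsFiniteMeasure μ := ‹IsFiniteMeasure (volume.restrict Ω : Measure (Fin N → ℝ))›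
  have hp1 : (1 : ℝ≥0∞) ≤ p := Fact.out
  have hp0 : p ≠ 0 := by
    intro hc; rw [hc] at hp1; exact (not_le.2 zero_lt_one) hp1
  have hgcont : Continuous g := g_continuous hg
  set KN : ℝ≥0∞ := kernelNorm Ω J p' with hKNdef
  have hKNfin : KN ≠ ⊤ := hJp'.ne
  set V : ℝ≥0∞ := μ Set.univ ^ p.toReal⁻¹ with hVdef
  have hVfin : V ≠ ⊤ := by
    refine ENNReal.rpow_ne_top_of_nonneg (inv_nonneg.2 ENNReal.toReal_nonneg) ?_
    rw [hμdef, Measure.restrict_apply_univ]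
    exact hΩfin.ne
  -- measurability of the three components
  have hmeas3 : ∀ w : (Fin N → ℝ) → ℝ, AEStronglyMeasurable w μ →
      AEStronglyMeasurable (fun x => -h x * w x) μ ∧
      AEStronglyMeasurable (fun x => g (KJ Ω J w x)) μ ∧
      AEStronglyMeasurable (fun x => f x (w x)) μ := by
    intro w hw
    set w₀ := hw.mk w with hw₀def
    have hw₀m : Measurable w₀ := hw.stronglyMeasurable_mk.measurable
    have hwae : w =ᵐ[μ] w₀ := hw.ae_eq_mk
    refine ⟨(hh.1.neg).mul hw, ?_, ?_⟩
    · have : (fun x => g (KJ Ω J w x)) = fun x => g (KJ Ω J w₀ x) := by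
        rw [KJ_congr (J := J) hwae]
      rw [this]
      exact (hgcont.measurable.comp (KJ_measurable hJmeas hw₀m)).aestronglyMeasurable
    · have hm : Measurable fun x => f x (w₀ x) := f_comp_measurable hfmeas hflip hw₀m
      have hfw : (fun x => f x (w x)) =ᵐ[μ] fun x => f x (w₀ x) := by
        filter_upwards [hwae] with x hx
        rw [hx]
      exact hm.aestronglyMeasurable.congr hfw.symm
  -- a.e. bound for the g ∘ K_J term
  have hgb : ∀ w : (Fin N → ℝ) → ℝ, MemLp w p μ →
      ∀ᵐ x ∂μ, ‖g (KJ Ω J w x)‖ ≤ k_g * (KN * eLpNorm w p μ).toReal + c_g := by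
    intro w hw
    filter_upwards [ae_restrict_mem hΩ] with x hx
    have h1 := KJ_nnnorm_bound hJmeas hpp' hw.1 hx
    have hfin : KN * eLpNorm w p μ ≠ ⊤ := ENNReal.mul_ne_top hKNfin hw.2.ne
    have h2 : ‖KJ Ω J w x‖ ≤ (KN * eLpNorm w p μ).toReal := by
      have := ENNReal.toReal_mono hfin h1
      simpa using this
    have h3 := hggrowth (KJ Ω J w x)
    rw [Real.norm_eq_abs]
    refine h3.trans ?_
    have : |KJ Ω J w x| ≤ (KN * eLpNorm w p μ).toReal := by
      rwa [Real.norm_eq_abs] at h2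
    nlinarith
  -- MemLp of Fmap
  have hFmem : ∀ u : Lp ℝ p μ, MemLp (Fmap Ω J h g f ⇑u) p μ := by
    intro u
    obtain ⟨hm1, hm2, hm3⟩ := hmeas3 ⇑u (Lp.aestronglyMeasurable u)
    have hG1 : MemLp (fun x => -h x * u x) p μ := by
      have hsm := (Lp.memLp u).smul (r := p) (hh.neg)
      have heq : (fun x => -h x * (⇑u : (Fin N → ℝ) → ℝ) x) = (-h) • (⇑u : (Fin N → ℝ) → ℝ) := rfl
      rw [heq]
      exact hsm
    have hG2 : MemLp (fun x => g (KJ Ω J (⇑u) x)) p μ :=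
      MemLp.of_bound hm2 _ (hgb ⇑u (Lp.memLp u))
    have hG3 : MemLp (fun x => f x (u x)) p μ := by
      refine MemLp.of_le (((Lp.memLp u).norm.const_mul k_f).add (memLp_const c_f)) hm3 ?_
      filter_upwards with x
      have := hfgrowth x (u x)
      rw [Real.norm_eq_abs]
      refine this.trans ?_
      refine le_trans ?_ (le_abs_self _)
      simp [Real.norm_eq_abs]
    exact ((hG1.add hG2).add hG3 : _)
  set FL : Lp ℝ p μ → Lp ℝ p μ := fun u => (hFmem u).toLp _ with hFLdef
  have hFLae : ∀ u : Lp ℝ p μ, ⇑(FL u) =ᵐ[μ] Fmap Ω J h g f ⇑u :=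
    fun u => MemLp.coeFn_toLp _
  -- growth bound
  set C1 : ℝ≥0∞ := eLpNorm h ⊤ μ + V * ENNReal.ofReal (k_g * KN.toReal) + ENNReal.ofReal k_f
    with hC1def
  set C2 : ℝ≥0∞ := V * ENNReal.ofReal c_g + V * ENNReal.ofReal c_f with hC2def
  have hC1fin : C1 ≠ ⊤ := by
    rw [hC1def]
    refine ENNReal.add_ne_top.2 ⟨ENNReal.add_ne_top.2 ⟨hh.2.ne, ?_⟩, ENNReal.ofReal_ne_top⟩
    exact ENNReal.mul_ne_top hVfin ENNReal.ofReal_ne_top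
  have hC2fin : C2 ≠ ⊤ := by
    rw [hC2def]
    exact ENNReal.add_ne_top.2 ⟨ENNReal.mul_ne_top hVfin ENNReal.ofReal_ne_top,
      ENNReal.mul_ne_top hVfin ENNReal.ofReal_ne_top⟩
  have hgrow : ∀ u : Lp ℝ p μ, ‖FL u‖ ≤ C1.toReal * ‖u‖ + C2.toReal := by
    intro u
    obtain ⟨hm1, hm2, hm3⟩ := hmeas3 ⇑u (Lp.aestronglyMeasurable u)
    set Eu := eLpNorm (⇑u) p μ with hEudef
    have hEufin : Eu ≠ ⊤ := (Lp.memLp u).2.ne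
    have he1 : eLpNorm (fun x => -h x * u x) p μ ≤ eLpNorm h ⊤ μ * Eu := by
      have hsm := eLpNorm_smul_le_mul_eLpNorm (f := ⇑u) (φ := -h) (μ := μ) (p := ⊤) (q := p) (r := p)
        (Lp.aestronglyMeasurable u) hh.1.neg
      rw [eLpNorm_neg] at hsm
      have heq : (fun x => -h x * (⇑u : (Fin N → ℝ) → ℝ) x) = (-h) • (⇑u : (Fin N → ℝ) → ℝ) := rfl
      rw [heq]
      exact hsm
    have he2 : eLpNorm (fun x => g (KJ Ω J (⇑u) x)) p μ
        ≤ V * ENNReal.ofReal (k_g * (KN * Eu).toReal + c_g) :=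
      eLpNorm_le_of_ae_bound (hgb ⇑u (Lp.memLp u))
    have he2' : eLpNorm (fun x => g (KJ Ω J (⇑u) x)) p μ
        ≤ V * ENNReal.ofReal (k_g * KN.toReal) * Eu + V * ENNReal.ofReal c_g := by
      refine he2.trans ?_
      have hofr : ENNReal.ofReal (k_g * (KN * Eu).toReal + c_g)
          = ENNReal.ofReal (k_g * KN.toReal) * Eu + ENNReal.ofReal c_g := by
        rw [ENNReal.ofReal_add (by positivity) hcg]
        congr 1
        rw [ENNReal.toReal_mul, ← mul_assoc, ENNReal.ofReal_mul (by positivity),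
          ENNReal.ofReal_toReal hEufin]
      rw [hofr, mul_add, mul_assoc]
    have he3 : eLpNorm (fun x => f x (u x)) p μ ≤ ENNReal.ofReal k_f * Eu
        + V * ENNReal.ofReal c_f := by
      have hb : eLpNorm (fun x => f x (u x)) p μ
          ≤ eLpNorm (fun x => k_f * ‖u x‖ + c_f) p μ := by
        refine eLpNorm_mono_ae ?_
        filter_upwards with x
        have h1 := hfgrowth x (u x)
        rw [Real.norm_eq_abs, Real.norm_eq_abs]
        refine h1.trans (le_trans ?_ (le_abs_self _))
        simp [Real.norm_eq_abs]
      refine hb.trans ?_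
      have hadd : eLpNorm (fun x => k_f * ‖u x‖ + c_f) p μ
          ≤ eLpNorm (fun x => k_f * ‖u x‖) p μ + eLpNorm (fun _ => c_f) p μ := by
        refine eLpNorm_add_le ((Lp.aestronglyMeasurable u).norm.const_mul k_f)
          aestronglyMeasurable_const hp1
      refine hadd.trans ?_
      have hc1 : eLpNorm (fun x => k_f * ‖u x‖) p μ = ENNReal.ofReal k_f * Eu := by
        have : (fun x => k_f * ‖(u : (Fin N → ℝ) → ℝ) x‖) = k_f • fun x => ‖u x‖ := rfl
        rw [this, eLpNorm_const_smul, eLpNorm_norm, ← Real.enorm_eq_ofReal hkf]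
      have hc2 : eLpNorm (fun _ : Fin N → ℝ => c_f) p μ ≤ V * ENNReal.ofReal c_f := by
        refine (eLpNorm_le_of_ae_bound (C := c_f) ?_).trans ?_
        · filter_upwards with x; rw [Real.norm_of_nonneg hcf]
        · rw [hVdef]
      rw [hc1]
      exact add_le_add le_rfl hc2
    have htot : eLpNorm (Fmap Ω J h g f ⇑u) p μ ≤ C1 * Eu + C2 := by
      have hsum1 : eLpNorm (fun x => -h x * u x + g (KJ Ω J (⇑u) x)) p μ
          ≤ eLpNorm (fun x => -h x * u x) p μ + eLpNorm (fun x => g (KJ Ω J (⇑u) x)) p μ :=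
        eLpNorm_add_le hm1 hm2 hp1
      have hsum2 : eLpNorm (Fmap Ω J h g f ⇑u) p μ
          ≤ eLpNorm (fun x => -h x * u x + g (KJ Ω J (⇑u) x)) p μ
            + eLpNorm (fun x => f x (u x)) p μ :=
        eLpNorm_add_le (hm1.add hm2) hm3 hp1
      calc eLpNorm (Fmap Ω J h g f ⇑u) p μ
          ≤ _ + _ := hsum2
        _ ≤ (eLpNorm h ⊤ μ * Eu + (V * ENNReal.ofReal (k_g * KN.toReal) * Eu
              + V * ENNReal.ofReal c_g)) + (ENNReal.ofReal k_f * Eu + V * ENNReal.ofReal c_f) :=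
            add_le_add (hsum1.trans (add_le_add he1 he2')) he3
        _ = C1 * Eu + C2 := by rw [hC1def, hC2def]; ring
    have hnorm : ‖FL u‖ = (eLpNorm (Fmap Ω J h g f ⇑u) p μ).toReal := Lp.norm_toLp _ _
    rw [hnorm]
    have hfinR : C1 * Eu + C2 ≠ ⊤ := by
      refine ENNReal.add_ne_top.2 ⟨ENNReal.mul_ne_top hC1fin hEufin, hC2fin⟩
    refine (ENNReal.toReal_mono hfinR htot).trans ?_
    rw [ENNReal.toReal_add (ENNReal.mul_ne_top hC1fin hEufin) hC2fin, ENNReal.toReal_mul]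
    have : ‖u‖ = Eu.toReal := Lp.norm_def u
    rw [this]
  -- local Lipschitz property
  have hlip : ∀ R : ℝ, ∃ L : ℝ≥0, LipschitzOnWith L FL (closedBall 0 R) := by
    intro R
    rcases lt_or_ge R 0 with hR | hR
    · refine ⟨1, LipschitzOnWith.of_dist_le_mul ?_⟩
      intro u hu
      rw [mem_closedBall_zero_iff] at hu
      exact absurd (lt_of_le_of_lt hu hR) (not_lt.2 (norm_nonneg u))
    · set r := (KN * ENNReal.ofReal R).toReal with hrdef
      obtain ⟨Lg, hLg⟩ := hg (closedBall (0 : ℝ) r) isBounded_closedBall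
      set Kc : ℝ≥0∞ := ENNReal.ofReal ((eLpNorm h ⊤ μ).toReal + (k : ℝ)) + V * Lg * KN
        with hKcdef
      have hKcfin : Kc ≠ ⊤ := by
        rw [hKcdef]
        exact ENNReal.add_ne_top.2 ⟨ENNReal.ofReal_ne_top,
          ENNReal.mul_ne_top (ENNReal.mul_ne_top hVfin ENNReal.coe_ne_top) hKNfin⟩
      refine ⟨Kc.toNNReal, LipschitzOnWith.of_dist_le_mul ?_⟩
      intro u hu v hv
      rw [mem_closedBall_zero_iff] at hu hv
      set w : (Fin N → ℝ) → ℝ := ⇑u - ⇑v with hwdef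
      have hwm : AEStronglyMeasurable w μ :=
        (Lp.aestronglyMeasurable u).sub (Lp.aestronglyMeasurable v)
      have hwmem : MemLp w p μ := (Lp.memLp u).sub (Lp.memLp v)
      set D := eLpNorm w p μ with hDdef
      have hDfin : D ≠ ⊤ := hwmem.2.ne
      have hDdist : D.toReal = dist u v := by
        rw [Lp.dist_def]
      -- membership of K_J values in the ball of radius r
      have hball : ∀ z : Lp ℝ p μ, ‖z‖ ≤ R → ∀ x ∈ Ω, KJ Ω J (⇑z) x ∈ closedBall (0 : ℝ) r := by
        intro z hz x hx
        have h1 := KJ_nnnorm_bound hJmeas hpp' (Lp.aestronglyMeasurable z) hx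
        have h2 : eLpNorm (⇑z) p μ ≤ ENNReal.ofReal R := by
          have : eLpNorm (⇑z) p μ = ENNReal.ofReal ‖z‖ := by
            rw [Lp.norm_def, ENNReal.ofReal_toReal (Lp.memLp z).2.ne]
          rw [this]
          exact ENNReal.ofReal_le_ofReal hz
        have h3 : (‖KJ Ω J (⇑z) x‖₊ : ℝ≥0∞) ≤ KN * ENNReal.ofReal R :=
          h1.trans (mul_le_mul_right h2 _)
        rw [mem_closedBall_zero_iff, hrdef]
        have := ENNReal.toReal_mono (ENNReal.mul_ne_top hKNfin ENNReal.ofReal_ne_top) h3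
        simpa using this
      -- pointwise bound
      have hptwise : ∀ᵐ x ∂μ, ‖Fmap Ω J h g f ⇑u x - Fmap Ω J h g f ⇑v x‖
          ≤ ((eLpNorm h ⊤ μ).toReal + (k : ℝ)) * ‖w x‖ + (Lg : ℝ) * (KN * D).toReal := by
        filter_upwards [ae_restrict_mem hΩ, enorm_ae_le_eLpNormEssSup h μ] with x hx hhx
        have hhx' : ‖h x‖ ≤ (eLpNorm h ⊤ μ).toReal := by
          have hfin : eLpNorm h ⊤ μ ≠ ⊤ := hh.2.ne
          rw [eLpNorm_exponent_top] at hfin ⊢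
          have := ENNReal.toReal_mono hfin hhx
          simpa using this
        have hT1 : ‖-h x * u x - -h x * v x‖ = ‖h x‖ * ‖w x‖ := by
          have : -h x * u x - -h x * v x = -h x * w x := by
            rw [hwdef]; simp [Pi.sub_apply]; ring
          rw [this, norm_mul, norm_neg]
        have hKJdiff : KJ Ω J (⇑u) x - KJ Ω J (⇑v) x = KJ Ω J w x := by
          rw [KJ, KJ, KJ, hwdef]
          rw [← integral_sub (KJ_integrable hJmeas hpp' hJp' (Lp.memLp u) hx)
            (KJ_integrable hJmeas hpp' hJp' (Lp.memLp v) hx)]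
          congr 1
          funext y
          simp [Pi.sub_apply]; ring
        have hKJw : ‖KJ Ω J w x‖ ≤ (KN * D).toReal := by
          have h1 := KJ_nnnorm_bound hJmeas hpp' hwm hx
          have := ENNReal.toReal_mono (ENNReal.mul_ne_top hKNfin hDfin) h1
          simpa [hDdef] using this
        have hT2 : ‖g (KJ Ω J (⇑u) x) - g (KJ Ω J (⇑v) x)‖ ≤ (Lg : ℝ) * (KN * D).toReal := by
          have hmem1 := hball u hu x hx
          have hmem2 := hball v hv x hx
          have := hLg.dist_le_mul _ hmem1 _ hmem2
          rw [Real.dist_eq, Real.dist_eq] at this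
          rw [Real.norm_eq_abs]
          refine this.trans ?_
          have : |KJ Ω J (⇑u) x - KJ Ω J (⇑v) x| ≤ (KN * D).toReal := by
            rw [hKJdiff]
            rwa [Real.norm_eq_abs] at hKJw
          exact mul_le_mul_of_nonneg_left this Lg.coe_nonneg
        have hT3 : ‖f x (u x) - f x (v x)‖ ≤ (k : ℝ) * ‖w x‖ := by
          have := (hflip x).dist_le_mul (u x) (v x)
          rw [Real.dist_eq, Real.dist_eq] at this
          rw [Real.norm_eq_abs]
          refine this.trans ?_
          have : w x = u x - v x := rfl
          rw [this, Real.norm_eq_abs]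
        have hdecomp : Fmap Ω J h g f ⇑u x - Fmap Ω J h g f ⇑v x
            = (-h x * u x - -h x * v x) + ((g (KJ Ω J (⇑u) x) - g (KJ Ω J (⇑v) x))
              + (f x (u x) - f x (v x))) := by
          rw [Fmap, Fmap]; ring
        rw [hdecomp]
        refine (norm_add_le _ _).trans ?_
        refine le_trans (add_le_add le_rfl (norm_add_le _ _)) ?_
        rw [hT1]
        have hw0 : (0:ℝ) ≤ ‖w x‖ := norm_nonneg _
        nlinarith [hT2, hT3]
      -- eLpNorm estimate
      have hE : eLpNorm (fun x => Fmap Ω J h g f ⇑u x - Fmap Ω J h g f ⇑v x) p μ ≤ Kc * D := by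
        have step1 : eLpNorm (fun x => Fmap Ω J h g f ⇑u x - Fmap Ω J h g f ⇑v x) p μ
            ≤ eLpNorm (fun x => ((eLpNorm h ⊤ μ).toReal + (k : ℝ)) * ‖w x‖
              + (Lg : ℝ) * (KN * D).toReal) p μ := by
          refine eLpNorm_mono_ae ?_
          filter_upwards [hptwise] with x hx
          refine hx.trans (le_trans ?_ (le_abs_self _))
          rw [Real.norm_eq_abs]
        refine step1.trans ?_
        have step2 : eLpNorm (fun x => ((eLpNorm h ⊤ μ).toReal + (k : ℝ)) * ‖w x‖
              + (Lg : ℝ) * (KN * D).toReal) p μ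
            ≤ eLpNorm (fun x => ((eLpNorm h ⊤ μ).toReal + (k : ℝ)) * ‖w x‖) p μ
              + eLpNorm (fun _ => (Lg : ℝ) * (KN * D).toReal) p μ :=
          eLpNorm_add_le (hwm.norm.const_mul _) aestronglyMeasurable_const hp1
        refine step2.trans ?_
        have hs1 : eLpNorm (fun x => ((eLpNorm h ⊤ μ).toReal + (k : ℝ)) * ‖w x‖) p μ
            = ENNReal.ofReal ((eLpNorm h ⊤ μ).toReal + (k : ℝ)) * D := by
          have : (fun x => ((eLpNorm h ⊤ μ).toReal + (k : ℝ)) * ‖w x‖)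
              = ((eLpNorm h ⊤ μ).toReal + (k : ℝ)) • fun x => ‖w x‖ := rfl
          rw [this, eLpNorm_const_smul, eLpNorm_norm,
            ← Real.enorm_eq_ofReal (by positivity)]
        have hs2 : eLpNorm (fun _ : Fin N → ℝ => (Lg : ℝ) * (KN * D).toReal) p μ
            ≤ V * ((Lg : ℝ≥0∞) * (KN * D)) := by
          refine (eLpNorm_le_of_ae_bound (C := (Lg : ℝ) * (KN * D).toReal) ?_).trans ?_
          · filter_upwards with x
            rw [Real.norm_of_nonneg (by positivity)]
          · rw [ENNReal.ofReal_mul Lg.coe_nonneg,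
              ENNReal.ofReal_toReal (ENNReal.mul_ne_top hKNfin hDfin),
              ENNReal.ofReal_coe_nnreal, hVdef]
        rw [hs1]
        refine (add_le_add le_rfl hs2).trans ?_
        rw [hKcdef]
        have : (ENNReal.ofReal ((eLpNorm h ⊤ μ).toReal + (k : ℝ)) + V * (Lg : ℝ≥0∞) * KN) * D
            = ENNReal.ofReal ((eLpNorm h ⊤ μ).toReal + (k : ℝ)) * D
              + V * ((Lg : ℝ≥0∞) * (KN * D)) := by ring
        rw [this]
      have hdist : dist (FL u) (FL v)
          = (eLpNorm (fun x => Fmap Ω J h g f ⇑u x - Fmap Ω J h g f ⇑v x) p μ).toReal := by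
        rw [Lp.dist_def]
        congr 1
        refine eLpNorm_congr_ae ?_
        filter_upwards [hFLae u, hFLae v] with x h1 h2
        simp only [Pi.sub_apply]
        rw [h1, h2]
      rw [hdist]
      calc (eLpNorm (fun x => Fmap Ω J h g f ⇑u x - Fmap Ω J h g f ⇑v x) p μ).toReal
          ≤ (Kc * D).toReal :=
            ENNReal.toReal_mono (ENNReal.mul_ne_top hKcfin hDfin) hE
        _ = Kc.toReal * dist u v := by rw [ENNReal.toReal_mul, hDdist]
        _ = (Kc.toNNReal : ℝ) * dist u v := rfl
  -- apply the abstract result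
  obtain ⟨u, hu0, husol, huuniq⟩ := abstract_ode (E := Lp ℝ p μ)
    (ENNReal.toReal_nonneg) (ENNReal.toReal_nonneg) hlip hgrow u₀
  refine ⟨u, ⟨hu0, fun t ht => ⟨FL (u t), husol t ht, hFLae (u t)⟩⟩, ?_⟩
  intro v hv t ht
  refine huuniq v hv.1 ?_ t ht
  intro s hs
  obtain ⟨Dv, hDv, hDvae⟩ := hv.2 s hs
  have hveq : Dv = FL (v s) := Lp.ext (hDvae.trans (hFLae (v s)).symm)
  rwa [hveq] at hDv
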